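/- Consider the solvmanifold cohomology algebra H* with H¹ = ⟨α³, α⁶⟩, H² = ⟨α¹⁶, α²³, α⁴⁵⟩, H⁴ ∋ α¹²³⁵, H⁵ generated with α³·(class in H⁴), and relations as in Λ*g̃ for g̃ = g_{4.1} ⊕ ℝ², with invariants under the ℤ₂ monodromy. Then for the symplectic class ω = ω₁₆α¹⁶ + ω₂₃α²³ + ω₄₅α⁴⁵ (ω₁₆ω₂₃ω₄₅ ≠ 0), the map L²: H¹ → H⁵, [α] ↦ [ω² ∧ α], is not injective: [ω² ∧ α³] = 0. -/
import Mathlib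


/-!
STATEMENT 18: For the modified Lie algebra g̃ = g_{4.1} ⊕ ℝ² (dα¹ = −α²∧α⁶,
dα² = −α³∧α⁶, dαⁱ = 0 otherwise), whose Chevalley–Eilenberg cohomology computes
H*(G_{6.10}^{a=0}/Γ_{2π}) with H¹ = ⟨α³,α⁶⟩, H² = ⟨α¹⁶,α²³,α⁴⁵⟩, and for the symplectic
class ω = ω₁₆α¹⁶ + ω₂₃α²³ + ω₄₅α⁴⁵ with ω₁₆ω₂₃ω₄₅ ≠ 0, the Lefschetz map
L² : H¹ → H⁵, [α] ↦ [ω² ∧ α], is not injective: the class of α³ is a nonzero element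
of H¹ (α³ is closed and not exact), yet [ω² ∧ α³] = 0, i.e. ω ∧ ω ∧ α³ is exact.

The complex is modeled concretely below (indices shifted down by one); ω is also closed.
-/

open Finset Module

/-- The exterior algebra on six degree-one generators α¹,…,α⁶, as coordinates on the
basis of increasing wedge monomials indexed by subsets of `Fin 6`. -/
abbrev Lam : Type := Finset (Fin 6) → ℝ

/-- The basis monomial α^S. -/
noncomputable def gen (S : Finset (Fin 6)) : Lam := Pi.single S 1

/-- Koszul sign when interleaving (the increasing enumerations of) `T` and `U`:
(−1) to the number of inversions. -/
def koszulSign (T U : Finset (Fin 6)) : ℝ :=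
  (-1 : ℝ) ^ (((T ×ˢ U).filter fun p => p.2 < p.1).card)

/-- The wedge (exterior) product in coordinates. -/
noncomputable def wedge (f h : Lam) : Lam := fun S =>
  ∑ T ∈ S.powerset, koszulSign T (S \ T) * f T * h (S \ T)

/-- The Chevalley–Eilenberg differential: the unique antiderivation with dαⁱ = g i,
given on the basis monomial α^S by d α^S = Σ_{i ∈ S} (−1)^{#{j ∈ S | j < i}} (g i) ∧ α^{S∖i}. -/
noncomputable def ceDiff (g : Fin 6 → Lam) : Lam →ₗ[ℝ] Lam :=
  (Pi.basisFun ℝ (Finset (Fin 6))).constr ℝ fun S =>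
    ∑ i ∈ S, ((-1 : ℝ) ^ ((S.filter fun j => j < i).card)) • wedge (g i) (gen (S.erase i))

/-- The subspace Λᵏ of homogeneous elements of degree `k`. -/
def degSub (k : ℕ) : Submodule ℝ Lam where
  carrier := {f | ∀ S : Finset (Fin 6), S.card ≠ k → f S = 0}
  add_mem' := by
    intro f g hf hg S hS
    simp only [Pi.add_apply, hf S hS, hg S hS, add_zero]
  zero_mem' := by intro S hS; rfl
  smul_mem' := by
    intro c f hf S hS
    simp only [Pi.smul_apply, hf S hS, smul_zero]

/-- Closed k-forms. -/
noncomputable def Zspace (D : Lam →ₗ[ℝ] Lam) (k : ℕ) : Submodule ℝ Lam :=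
  degSub k ⊓ LinearMap.ker D

/-- Exact k-forms (the image of the (k−1)-forms under the differential). -/
noncomputable def Bspace (D : Lam →ₗ[ℝ] Lam) (k : ℕ) : Submodule ℝ Lam :=
  (degSub (k - 1)).map D

/-- dα¹ = −α²⁶, dα² = −α³⁶ (0-indexed). -/
noncomputable def gDiff : Fin 6 → Lam := ![-gen {1, 5}, -gen {2, 5}, 0, 0, 0, 0]

noncomputable def D : Lam →ₗ[ℝ] Lam := ceDiff gDiff


-- auxiliary lemmas
lemma gen_apply (T S : Finset (Fin 6)) : gen T S = if S = T then 1 else 0 := by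
  simp [gen, Pi.single_apply]

lemma wedge_gen_gen (T U : Finset (Fin 6)) (h : Disjoint T U) :
    wedge (gen T) (gen U) = koszulSign T U • gen (T ∪ U) := by
  funext S
  simp only [wedge, gen_apply, Pi.smul_apply, smul_eq_mul]
  have key : ∀ T' ∈ S.powerset,
      koszulSign T' (S \ T') * (if T' = T then 1 else 0) * (if S \ T' = U then 1 else 0)
      = if T' = T then koszulSign T' (S \ T') * (if S \ T' = U then 1 else 0) else 0 := by
    intro T' _
    by_cases hT : T' = T <;> simp [hT]
  rw [Finset.sum_congr rfl key, Finset.sum_ite_eq']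
  by_cases hsub : T ⊆ S
  · by_cases hU : S \ T = U
    · have hS : S = T ∪ U := by rw [← hU, Finset.union_sdiff_of_subset hsub]
      subst hS
      rw [if_pos (Finset.mem_powerset.2 hsub), if_pos hU, if_pos rfl, hU]
    · have hS : S ≠ T ∪ U := by
        intro hS
        exact hU (by rw [hS, Finset.union_sdiff_cancel_left h])
      rw [if_pos (Finset.mem_powerset.2 hsub), if_neg hU, if_neg hS, mul_zero, mul_zero]
  · have hS : S ≠ T ∪ U := fun hS => hsub (hS ▸ Finset.subset_union_left)
    rw [if_neg (fun hm => hsub (Finset.mem_powerset.1 hm)), if_neg hS, mul_zero]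

lemma wedge_gen_gen_nd (T U : Finset (Fin 6)) (h : ¬ Disjoint T U) :
    wedge (gen T) (gen U) = 0 := by
  funext S
  simp only [wedge, gen_apply, Pi.zero_apply]
  apply Finset.sum_eq_zero
  intro T' hT'
  by_cases h1 : T' = T
  · subst h1
    by_cases h2 : S \ T' = U
    · exact absurd (h2 ▸ Finset.disjoint_sdiff) h
    · simp [if_neg h2]
  · simp [if_neg h1]

lemma wedge_add_left (f g k : Lam) : wedge (f + g) k = wedge f k + wedge g k := by
  funext S
  simp [wedge, add_mul, mul_add, Finset.sum_add_distrib]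

lemma wedge_add_right (f g k : Lam) : wedge k (f + g) = wedge k f + wedge k g := by
  funext S
  simp [wedge, add_mul, mul_add, Finset.sum_add_distrib]

lemma wedge_smul_left (c : ℝ) (f k : Lam) : wedge (c • f) k = c • wedge f k := by
  funext S
  simp only [wedge, Pi.smul_apply, smul_eq_mul, Finset.mul_sum]
  exact Finset.sum_congr rfl fun T _ => by ring

lemma wedge_smul_right (c : ℝ) (f k : Lam) : wedge k (c • f) = c • wedge k f := by
  funext S
  simp only [wedge, Pi.smul_apply, smul_eq_mul, Finset.mul_sum]
  exact Finset.sum_congr rfl fun T _ => by ring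

lemma wedge_zero_left (k : Lam) : wedge 0 k = 0 := by
  funext S; simp [wedge]

lemma wedge_zero_right (k : Lam) : wedge k 0 = 0 := by
  funext S; simp [wedge]

lemma wedge_neg_left (f k : Lam) : wedge (-f) k = - wedge f k := by
  funext S
  simp only [wedge, Pi.neg_apply]
  rw [← Finset.sum_neg_distrib]
  exact Finset.sum_congr rfl fun T _ => by ring

lemma D_gen (S : Finset (Fin 6)) : D (gen S) =
    ∑ i ∈ S, ((-1 : ℝ) ^ ((S.filter fun j => j < i).card)) • wedge (gDiff i) (gen (S.erase i)) := by
  have : gen S = Pi.basisFun ℝ (Finset (Fin 6)) S := by simp [gen]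
  rw [D, ceDiff, this, Basis.constr_basis]

lemma ks_eval (T U : Finset (Fin 6)) (n : ℕ)
    (hn : ((T ×ˢ U).filter fun p => p.2 < p.1).card = n) : koszulSign T U = (-1 : ℝ) ^ n := by
  rw [koszulSign, hn]

lemma gDiff0 : gDiff 0 = -gen {1, 5} := rfl
lemma gDiff1 : gDiff 1 = -gen {2, 5} := rfl
lemma gDiff2 : gDiff 2 = 0 := rfl
lemma gDiff3 : gDiff 3 = 0 := rfl
lemma gDiff4 : gDiff 4 = 0 := rfl
lemma gDiff5 : gDiff 5 = 0 := rfl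

lemma Dg05 : D (gen {0, 5}) = 0 := by
  rw [D_gen, show ({0,5} : Finset (Fin 6)) = insert 0 {5} from rfl,
    Finset.sum_insert (by decide), Finset.sum_singleton]
  rw [show (insert 0 {5} : Finset (Fin 6)).erase 0 = {5} from by decide,
    show (insert 0 {5} : Finset (Fin 6)).erase 5 = {0} from by decide]
  rw [gDiff0, gDiff5, wedge_neg_left, wedge_gen_gen_nd _ _ (by decide), wedge_zero_left]
  simp

lemma Dg12 : D (gen {1, 2}) = 0 := by
  rw [D_gen, show ({1,2} : Finset (Fin 6)) = insert 1 {2} from rfl,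
    Finset.sum_insert (by decide), Finset.sum_singleton]
  rw [show (insert 1 {2} : Finset (Fin 6)).erase 1 = {2} from by decide,
    show (insert 1 {2} : Finset (Fin 6)).erase 2 = {1} from by decide]
  rw [gDiff1, gDiff2, wedge_neg_left, wedge_gen_gen_nd _ _ (by decide), wedge_zero_left]
  simp

lemma Dg34 : D (gen {3, 4}) = 0 := by
  rw [D_gen, show ({3,4} : Finset (Fin 6)) = insert 3 {4} from rfl,
    Finset.sum_insert (by decide), Finset.sum_singleton]
  rw [gDiff3, gDiff4, wedge_zero_left, wedge_zero_left]
  simp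

lemma Dg2 : D (gen {2}) = 0 := by
  rw [D_gen, Finset.sum_singleton, gDiff2, wedge_zero_left]
  simp

lemma Dg0134 : D (gen {0, 1, 3, 4}) = gen {0, 2, 3, 4, 5} := by
  rw [D_gen, show ({0,1,3,4} : Finset (Fin 6)) = insert 0 (insert 1 (insert 3 {4})) from rfl,
    Finset.sum_insert (by decide), Finset.sum_insert (by decide),
    Finset.sum_insert (by decide), Finset.sum_singleton]
  rw [show ((insert 0 (insert 1 (insert 3 ({4} : Finset (Fin 6))))).erase 0) = {1,3,4} from by decide,
    show ((insert 0 (insert 1 (insert 3 ({4} : Finset (Fin 6))))).erase 1) = {0,3,4} from by decide]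
  rw [gDiff0, gDiff1, gDiff3, gDiff4, wedge_zero_left, wedge_zero_left,
    wedge_neg_left, wedge_neg_left, wedge_gen_gen_nd {1,5} {1,3,4} (by decide),
    wedge_gen_gen {2,5} {0,3,4} (by decide), ks_eval {2,5} {0,3,4} 4 (by decide)]
  rw [show ({2,5} ∪ {0,3,4} : Finset (Fin 6)) = {0,2,3,4,5} from by decide]
  rw [show ((insert 0 (insert 1 (insert 3 ({4} : Finset (Fin 6))))).filter fun j => j < 0).card = 0 from by decide,
    show ((insert 0 (insert 1 (insert 3 ({4} : Finset (Fin 6))))).filter fun j => j < 1).card = 1 from by decide]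
  norm_num

lemma gDiff_empty (i : Fin 6) : gDiff i ∅ = 0 := by
  fin_cases i
  · rw [show gDiff ((fun i => i) ⟨0, by norm_num⟩) = gDiff 0 from rfl, gDiff0, Pi.neg_apply, gen_apply, if_neg (by decide)]; ring
  · rw [show gDiff ((fun i => i) ⟨1, by norm_num⟩) = gDiff 1 from rfl, gDiff1, Pi.neg_apply, gen_apply, if_neg (by decide)]; ring
  · rfl
  · rfl
  · rfl
  · rfl

lemma gDiff_two (i : Fin 6) : gDiff i {2} = 0 := by
  fin_cases i
  · rw [show gDiff ((fun i => i) ⟨0, by norm_num⟩) = gDiff 0 from rfl, gDiff0, Pi.neg_apply, gen_apply, if_neg (by decide)]; ring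
  · rw [show gDiff ((fun i => i) ⟨1, by norm_num⟩) = gDiff 1 from rfl, gDiff1, Pi.neg_apply, gen_apply, if_neg (by decide)]; ring
  · rfl
  · rfl
  · rfl
  · rfl

lemma wedge_apply_two (g k : Lam) (h1 : g ∅ = 0) (h2 : g {2} = 0) : wedge g k {2} = 0 := by
  show ∑ T ∈ ({2} : Finset (Fin 6)).powerset, koszulSign T ({2} \ T) * g T * k ({2} \ T) = 0
  rw [show ({2} : Finset (Fin 6)).powerset = {∅, {2}} from by decide,
    Finset.sum_insert (by decide), Finset.sum_singleton]
  simp [h1, h2]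

lemma Dgen_two (S : Finset (Fin 6)) : D (gen S) {2} = 0 := by
  rw [D_gen, Finset.sum_apply]
  apply Finset.sum_eq_zero
  intro i _
  rw [Pi.smul_apply, wedge_apply_two _ _ (gDiff_empty i) (gDiff_two i), smul_zero]

lemma not_mem_range : gen {2} ∉ LinearMap.range D := by
  rintro ⟨f, hf⟩
  have h2 : D f {2} = 0 := by
    rw [LinearMap.pi_apply_eq_sum_univ D f, Finset.sum_apply]
    apply Finset.sum_eq_zero
    intro S _
    have hS : (fun j => if S = j then (1 : ℝ) else 0) = gen S := by
      funext j; rw [gen_apply]; simp [eq_comm]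
    rw [Pi.smul_apply, hS, Dgen_two, smul_zero]
  rw [hf, gen_apply] at h2
  norm_num at h2

lemma wAA : wedge (gen {0, 5}) (gen {0, 5}) = 0 := wedge_gen_gen_nd _ _ (by decide)
lemma wBB : wedge (gen {1, 2}) (gen {1, 2}) = 0 := wedge_gen_gen_nd _ _ (by decide)
lemma wCC : wedge (gen {3, 4}) (gen {3, 4}) = 0 := wedge_gen_gen_nd _ _ (by decide)

lemma wAB : wedge (gen {0, 5}) (gen {1, 2}) = gen {0, 1, 2, 5} := by
  rw [wedge_gen_gen _ _ (by decide), ks_eval _ _ 2 (by decide),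
    show ({0,5} ∪ {1,2} : Finset (Fin 6)) = {0,1,2,5} from by decide]
  norm_num

lemma wBA : wedge (gen {1, 2}) (gen {0, 5}) = gen {0, 1, 2, 5} := by
  rw [wedge_gen_gen _ _ (by decide), ks_eval _ _ 2 (by decide),
    show ({1,2} ∪ {0,5} : Finset (Fin 6)) = {0,1,2,5} from by decide]
  norm_num

lemma wAC : wedge (gen {0, 5}) (gen {3, 4}) = gen {0, 3, 4, 5} := by
  rw [wedge_gen_gen _ _ (by decide), ks_eval _ _ 2 (by decide),
    show ({0,5} ∪ {3,4} : Finset (Fin 6)) = {0,3,4,5} from by decide]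
  norm_num

lemma wCA : wedge (gen {3, 4}) (gen {0, 5}) = gen {0, 3, 4, 5} := by
  rw [wedge_gen_gen _ _ (by decide), ks_eval _ _ 2 (by decide),
    show ({3,4} ∪ {0,5} : Finset (Fin 6)) = {0,3,4,5} from by decide]
  norm_num

lemma wBC : wedge (gen {1, 2}) (gen {3, 4}) = gen {1, 2, 3, 4} := by
  rw [wedge_gen_gen _ _ (by decide), ks_eval _ _ 0 (by decide),
    show ({1,2} ∪ {3,4} : Finset (Fin 6)) = {1,2,3,4} from by decide]
  norm_num

lemma wCB : wedge (gen {3, 4}) (gen {1, 2}) = gen {1, 2, 3, 4} := by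
  rw [wedge_gen_gen _ _ (by decide), ks_eval _ _ 4 (by decide),
    show ({3,4} ∪ {1,2} : Finset (Fin 6)) = {1,2,3,4} from by decide]
  norm_num

lemma wABg2 : wedge (gen {0, 1, 2, 5}) (gen {2}) = 0 := wedge_gen_gen_nd _ _ (by decide)
lemma wBCg2 : wedge (gen {1, 2, 3, 4}) (gen {2}) = 0 := wedge_gen_gen_nd _ _ (by decide)

lemma wACg2 : wedge (gen {0, 3, 4, 5}) (gen {2}) = -gen {0, 2, 3, 4, 5} := by
  rw [wedge_gen_gen _ _ (by decide), ks_eval _ _ 3 (by decide),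
    show ({0,3,4,5} ∪ {2} : Finset (Fin 6)) = {0,2,3,4,5} from by decide]
  norm_num

theorem not_one_lefschetz (c16 c23 c45 : ℝ) (h : c16 * c23 * c45 ≠ 0) :
    D (c16 • gen {0, 5} + c23 • gen {1, 2} + c45 • gen {3, 4}) = 0 ∧
    D (gen {2}) = 0 ∧
    gen {2} ∉ LinearMap.range D ∧
    wedge (wedge (c16 • gen {0, 5} + c23 • gen {1, 2} + c45 • gen {3, 4})
        (c16 • gen {0, 5} + c23 • gen {1, 2} + c45 • gen {3, 4}))
      (gen {2}) ∈ LinearMap.range D := by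
  refine ⟨?_, Dg2, not_mem_range, ?_⟩
  · rw [map_add, map_add, map_smul, map_smul, map_smul, Dg05, Dg12, Dg34]
    simp
  · refine ⟨(-2 * (c16 * c45)) • gen {0, 1, 3, 4}, ?_⟩
    rw [map_smul, Dg0134]
    simp only [wedge_add_left, wedge_add_right, wedge_smul_left, wedge_smul_right,
      wAA, wBB, wCC, wAB, wBA, wAC, wCA, wBC, wCB, smul_zero, zero_add, add_zero,
      wedge_zero_left, wABg2, wBCg2, wACg2]
    module
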